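/- Let s > 0, σ > 0, α > 0, β = σ². In the scalar case with A = s and Ã = αs, the correction factor K = (s² + σ²)⁻¹(αs² + σ²) satisfies |1 − K⁻¹| ≤ |1 − α⁻¹|, i.e., ‖I − K⁻¹‖ ≤ ‖I − F̃⁻¹F‖ in the 1-dimensional diagonal setting, with equality iff α = 1. -/

import Mathlib

/-!
Both sides factor through `α - 1`: `1 - K⁻¹ = (α - 1) · s² / (α s² + σ²)` and
`1 - α⁻¹ = (α - 1) · α⁻¹`, and since `σ² > 0` the factor `s² / (α s² + σ²)` is nonnegative and
strictly below `α⁻¹`. The inequality is therefore strict unless `α - 1 = 0`.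
-/

theorem abs_mul_le_abs_mul_and_eq_iff {𝕜 : Type*} [Field 𝕜] [LinearOrder 𝕜]
    [IsStrictOrderedRing 𝕜] (c : 𝕜) {t u : 𝕜} (ht : 0 ≤ t) (htu : t < u) :
    |c * t| ≤ |c * u| ∧ (|c * t| = |c * u| ↔ c = 0) := by
  rw [abs_mul, abs_mul, abs_of_nonneg ht, abs_of_pos (ht.trans_lt htu)]
  refine ⟨mul_le_mul_of_nonneg_left htu.le (abs_nonneg c), ⟨fun h => ?_, fun h => by simp [h]⟩⟩
  by_contra hc
  exact (mul_lt_mul_of_pos_left htu (abs_pos.mpr hc)).ne h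

theorem one_sub_inv_inv_mul (a b : ℝ) (hb : b ≠ 0) : 1 - (a⁻¹ * b)⁻¹ = (b - a) / b := by
  rw [mul_inv, inv_inv]
  field_simp

theorem sq_div_mul_sq_add_sq_lt_inv {s σ α : ℝ} (hσ : σ ≠ 0) (hα : 0 < α) :
    s ^ 2 / (α * s ^ 2 + σ ^ 2) < α⁻¹ := by
  have hσ2 : 0 < σ ^ 2 := by positivity
  rw [div_lt_iff₀ (by positivity)]
  calc s ^ 2 < s ^ 2 + σ ^ 2 / α := lt_add_of_pos_right _ (by positivity)
    _ = α⁻¹ * (α * s ^ 2 + σ ^ 2) := by field_simp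

theorem scalar_correction_bound_general (s σ α : ℝ) (hσ : 0 < σ) (hα : 0 < α)
    (K : ℝ) (hK : K = (s ^ 2 + σ ^ 2)⁻¹ * (α * s ^ 2 + σ ^ 2)) :
    |1 - K⁻¹| ≤ |1 - α⁻¹| ∧ (|1 - K⁻¹| = |1 - α⁻¹| ↔ α = 1) := by
  have hden : 0 < α * s ^ 2 + σ ^ 2 := by positivity
  have hK' : 1 - K⁻¹ = (α - 1) * (s ^ 2 / (α * s ^ 2 + σ ^ 2)) := by
    rw [hK, one_sub_inv_inv_mul _ _ hden.ne']
    ring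
  have hα' : 1 - α⁻¹ = (α - 1) * α⁻¹ := by
    field_simp
  rw [hK', hα', ← sub_eq_zero (a := α)]
  exact abs_mul_le_abs_mul_and_eq_iff _ (by positivity)
    (sq_div_mul_sq_add_sq_lt_inv hσ.ne' hα)

theorem scalar_correction_bound (s σ α : ℝ) (hs : 0 < s) (hσ : 0 < σ) (hα : 0 < α)
    (K : ℝ) (hK : K = (s ^ 2 + σ ^ 2)⁻¹ * (α * s ^ 2 + σ ^ 2)) :
    |1 - K⁻¹| ≤ |1 - α⁻¹| ∧ (|1 - K⁻¹| = |1 - α⁻¹| ↔ α = 1) :=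
  scalar_correction_bound_general s σ α hσ hα K hK
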